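/- arXiv:0909.2381 — 6 statements merged into one kernel-verified Lean document; each statement's English description precedes it below -/
import Mathlib

section
/- In the symmetric group S(ℕ) with the topology of pointwise convergence, the sequence {b_n}, where b_n is the transposition swapping n and n+1, is Cauchy productive but not productive: the partial products π_n = b_0·b_1···b_n form a left Cauchy sequence that does not converge in S(ℕ). -/
/-!
The `n`-th partial product `b₀ ⋯ b_{n-1}` sends every `x < n` to `x + 1`. So for each point the
partial products are eventually constant, which in the topology of pointwise convergence makes
them left Cauchy; but their only possible limit is the successor map, which misses `0`.
-/

open Filter Topology

def LeftCauchy {G : Type*} [Group G] [TopologicalSpace G] (a : ℕ → G) : Prop :=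
  ∀ U ∈ 𝓝 (1 : G), ∃ n : ℕ, ∀ k ≥ n, ∀ l ≥ n, (a k)⁻¹ * a l ∈ U

def partProd {G : Type*} [Monoid G] (b : ℕ → G) (n : ℕ) : G :=
  ((List.range n).map b).prod

def CauchyProductive {G : Type*} [Group G] [TopologicalSpace G] (b : ℕ → G) : Prop :=
  LeftCauchy (fun n => partProd b (n + 1))

/-- The topology of pointwise convergence on the symmetric group `S(ℕ)`, induced from
the product topology on `ℕ → ℕ` (with `ℕ` discrete). -/
instance : TopologicalSpace (Equiv.Perm ℕ) :=
  TopologicalSpace.induced (fun σ => (σ : ℕ → ℕ)) Pi.topologicalSpace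

namespace Equiv.Perm

theorem tendsto_nhds_iff_eventually_apply_eq {ι : Type*} {l : Filter ι} {f : ι → Perm ℕ}
    {σ : Perm ℕ} : Tendsto f l (𝓝 σ) ↔ ∀ x, ∀ᶠ i in l, f i x = σ x := by
  rw [nhds_induced, tendsto_comap_iff, tendsto_pi_nhds]
  simp only [nhds_discrete, tendsto_pure, Function.comp_apply]

theorem leftCauchy_of_eventually_apply_eq {a : ℕ → Perm ℕ}
    (h : ∀ x, ∃ y, ∀ᶠ n in atTop, a n x = y) : LeftCauchy a := by
  have hquot : Tendsto (fun p : ℕ × ℕ => (a p.1)⁻¹ * a p.2) atTop (𝓝 1) := by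
    refine tendsto_nhds_iff_eventually_apply_eq.2 fun x => ?_
    obtain ⟨y, hy⟩ := h x
    rw [← prod_atTop_atTop_eq]
    filter_upwards [hy.prod_mk hy] with p hp
    rw [mul_apply, hp.2, ← hp.1, inv_def, symm_apply_apply, one_apply]
  exact fun U hU => eventually_atTop_prod_self'.1 (hquot hU)

end Equiv.Perm

theorem partProd_succ {M : Type*} [Monoid M] (b : ℕ → M) (n : ℕ) :
    partProd b (n + 1) = partProd b n * b n := by
  simp [partProd, List.range_succ]

section AdjacentTranspositions

open Equiv

theorem partProd_swap_succ_apply_of_lt {n x : ℕ} (h : n < x) :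
    partProd (fun k => swap k (k + 1)) n x = x := by
  induction n with
  | zero => rfl
  | succ n ih =>
    rw [partProd_succ, Perm.mul_apply, swap_apply_of_ne_of_ne (by omega) (by omega), ih (by omega)]

theorem partProd_swap_succ_apply_of_gt {n x : ℕ} (h : x < n) :
    partProd (fun k => swap k (k + 1)) n x = x + 1 := by
  induction n with
  | zero => omega
  | succ n ih =>
    rw [partProd_succ, Perm.mul_apply]
    rcases (Nat.lt_succ_iff.mp h).eq_or_lt with rfl | hx
    · rw [swap_apply_left, partProd_swap_succ_apply_of_lt (Nat.lt_succ_self x)]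
    · rw [swap_apply_of_ne_of_ne (by omega) (by omega), ih hx]

end AdjacentTranspositions

/-- In `S(ℕ)` with the pointwise convergence topology, the sequence of transpositions
`b n = (n, n+1)` is Cauchy productive but not productive: the partial products form a
left Cauchy sequence which does not converge. -/
theorem stmt_4 :
    CauchyProductive (fun n => Equiv.swap n (n + 1)) ∧
    ¬ ∃ σ : Equiv.Perm ℕ,
        Tendsto (fun n => partProd (fun k => Equiv.swap k (k + 1)) (n + 1)) atTop (𝓝 σ) := by
  have hsucc : ∀ x, ∀ᶠ n in atTop, partProd (fun k => Equiv.swap k (k + 1)) (n + 1) x = x + 1 :=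
    fun x => (eventually_ge_atTop x).mono fun n hn => partProd_swap_succ_apply_of_gt (by omega)
  refine ⟨Equiv.Perm.leftCauchy_of_eventually_apply_eq fun x => ⟨x + 1, hsucc x⟩, ?_⟩
  rintro ⟨σ, hσ⟩
  have hσ_succ : ∀ x, σ x = x + 1 := fun x =>
    let ⟨_, hlim, hx⟩ := ((Equiv.Perm.tendsto_nhds_iff_eventually_apply_eq.1 hσ x).and
      (hsucc x)).exists
    hlim.symm.trans hx
  exact Nat.succ_ne_zero _ ((hσ_succ (σ⁻¹ 0)).symm.trans (σ.apply_symm_apply 0))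
end

section
/- An NSS topological group contains no f_ω-Cauchy productive sequences: if G is NSS, then for every faithfully indexed sequence {a_n} in G there exists a function z : ℕ → ℤ such that the sequence {a_n^{z(n)}} is not Cauchy productive. -/
/-!
In an NSS group fix a neighborhood `U` of `1` containing no nontrivial subgroup. Every `g ≠ 1`
generates a nontrivial cyclic subgroup, so some power `g ^ m` leaves `U`; choose `z n` this way
for each `a n ≠ 1`. The terms of a Cauchy productive sequence tend to `1`, being quotients of
consecutive partial products, while an injective sequence takes the value `1` at most once.
Hence `a n ^ z n` cannot be Cauchy productive.
-/

open Filter Topology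

/-- A topological group has no small subgroups (NSS) if some neighborhood of the identity
contains no nontrivial subgroup. -/
def NSS (G : Type*) [Group G] [TopologicalSpace G] : Prop :=
  ∃ U ∈ 𝓝 (1 : G), ∀ H : Subgroup G, (H : Set G) ⊆ U → H = ⊥

theorem exists_zpow_notMem_of_ne_one {G : Type*} [Group G] {U : Set G}
    (hU : ∀ H : Subgroup G, (H : Set G) ⊆ U → H = ⊥) {g : G} (hg : g ≠ 1) :
    ∃ m : ℤ, g ^ m ∉ U := by
  by_contra! h
  have hbot : Subgroup.zpowers g = ⊥ := hU _ (by rintro _ ⟨m, rfl⟩; exact h m)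
  exact hg (Subgroup.zpowers_eq_bot.mp hbot)

theorem CauchyProductive.tendsto_one {G : Type*} [Group G] [TopologicalSpace G] {b : ℕ → G}
    (hb : CauchyProductive b) : Tendsto b atTop (𝓝 1) := by
  intro U hU
  obtain ⟨N, hN⟩ := hb U hU
  refine mem_atTop_sets.mpr ⟨N + 1, fun n hn => ?_⟩
  obtain ⟨k, rfl⟩ := Nat.exists_eq_add_of_le' (Nat.one_le_of_lt hn)
  have hstep := hN k (by omega) (k + 1) (by omega)
  dsimp only at hstep
  rwa [partProd_succ b (k + 1), inv_mul_cancel_left] at hstep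

theorem Function.Injective.eventually_ne_atTop {α : Type*} {a : ℕ → α}
    (ha : Function.Injective a) (x : α) : ∀ᶠ n in atTop, a n ≠ x := by
  rw [← Nat.cofinite_eq_atTop]
  exact ha.tendsto_cofinite.eventually (eventually_cofinite_ne x)

theorem stmt_5_general {G : Type*} [Group G] [TopologicalSpace G]
    (hG : NSS G) (a : ℕ → G) (ha : Function.Injective a) :
    ∃ z : ℕ → ℤ, ¬ CauchyProductive (fun n => a n ^ z n) := by
  obtain ⟨U, hU, hsmall⟩ := hG
  have hescape : ∀ n, ∃ m : ℤ, a n ≠ 1 → a n ^ m ∉ U := fun n => by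
    by_cases h : a n = 1
    · exact ⟨0, fun h' => (h' h).elim⟩
    · obtain ⟨m, hm⟩ := exists_zpow_notMem_of_ne_one hsmall h
      exact ⟨m, fun _ => hm⟩
  choose z hz using hescape
  refine ⟨z, fun hC => ?_⟩
  obtain ⟨n, hnU, hn⟩ := ((hC.tendsto_one.eventually_mem hU).and (ha.eventually_ne_atTop 1)).exists
  exact hz n hn hnU

/-- An NSS group contains no `f_ω`-Cauchy productive sequences: for every faithfully indexed
sequence `a` there is `z : ℕ → ℤ` such that `fun n => a n ^ z n` is not Cauchy productive. -/
theorem stmt_5 {G : Type*} [Group G] [TopologicalSpace G] [IsTopologicalGroup G]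
    (hG : NSS G) (a : ℕ → G) (ha : Function.Injective a) :
    ∃ z : ℕ → ℤ, ¬ CauchyProductive (fun n => a n ^ z n) :=
  stmt_5_general hG a ha
end

section
/- If f : ℕ → ℕ is a function and a sequence {a_n} in an abelian topological group G is f*-summable (meaning {z(n)·a_n} is summable for every z : ℕ → ℕ with z ≤ f pointwise), then {a_n} is f-summable (meaning {z(n)·a_n} is summable for every z : ℕ → ℤ with |z| ≤ f pointwise). -/
open Filter Topology

def partSum {G : Type*} [AddCommMonoid G] (c : ℕ → G) (n : ℕ) : G :=
  ∑ i ∈ Finset.range (n + 1), c i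

/-- A sequence is summable if its sequence of partial sums converges. -/
def SummableSeq {G : Type*} [AddCommMonoid G] [TopologicalSpace G] (c : ℕ → G) : Prop :=
  ∃ s : G, Tendsto (fun n => partSum c n) atTop (𝓝 s)

/-! Write `z = z⁺ - z⁻` with `z⁺ = max z 0` and `z⁻ = max (-z) 0`: both parts are natural
sequences bounded by `|z| ≤ f`, so `z⁺ • a` and `z⁻ • a` are summable, and partial sums of a
difference are differences of partial sums. -/

theorem partSum_sub {G : Type*} [AddCommGroup G] (c d : ℕ → G) (n : ℕ) :
    partSum (c - d) n = partSum c n - partSum d n :=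
  Finset.sum_sub_distrib ..

theorem SummableSeq.sub {G : Type*} [AddCommGroup G] [TopologicalSpace G] [ContinuousSub G]
    {c d : ℕ → G} (hc : SummableSeq c) (hd : SummableSeq d) : SummableSeq (c - d) := by
  obtain ⟨s, hs⟩ := hc
  obtain ⟨t, ht⟩ := hd
  exact ⟨s - t, by simpa only [partSum_sub] using hs.sub ht⟩

theorem zsmul_eq_toNat_smul_sub_toNat_neg_smul {G : Type*} [AddCommGroup G] (z : ℤ) (x : G) :
    z • x = (z.toNat : ℤ) • x - ((-z).toNat : ℤ) • x := by
  rw [← sub_smul, Int.toNat_sub_toNat_neg]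

/-- If a sequence `a` in an abelian topological group is `f*`-summable
(`fun n => z n • a n` is summable for every `z : ℕ → ℕ` with `z ≤ f`), then it is
`f`-summable (`fun n => z n • a n` is summable for every `z : ℕ → ℤ` with `|z| ≤ f`). -/
theorem stmt_6 {G : Type*} [AddCommGroup G] [TopologicalSpace G] [IsTopologicalAddGroup G]
    (f : ℕ → ℕ) (a : ℕ → G)
    (h : ∀ z : ℕ → ℕ, (∀ n, z n ≤ f n) → SummableSeq (fun n => (z n : ℤ) • a n)) :
    ∀ z : ℕ → ℤ, (∀ n, (z n).natAbs ≤ f n) → SummableSeq (fun n => z n • a n) := by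
  intro z hz
  have hpos : ∀ n, (z n).toNat ≤ f n := fun n => by have := hz n; omega
  have hneg : ∀ n, (-z n).toNat ≤ f n := fun n => by have := hz n; omega
  have hsplit : (fun n => z n • a n) =
      (fun n => ((z n).toNat : ℤ) • a n) - fun n => ((-z n).toNat : ℤ) • a n :=
    funext fun n => zsmul_eq_toNat_smul_sub_toNat_neg_smul (z n) (a n)
  rw [hsplit]
  exact (h _ hpos).sub (h _ hneg)
end

section
/- Let {U_j : j ∈ ℕ} be a family of subsets of a group G such that e ∈ U_{j+1} and U_{j+1}·U_{j+1}·U_{j+1} ⊆ U_j for every j ∈ ℕ. If n ∈ ℕ and φ : {0,…,n} → ℕ∖{0} is injective, then U_{φ(0)}·U_{φ(1)}···U_{φ(n)} ⊆ U_{k−1}, where k = min{φ(j) : j = 0,…,n}. -/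
/-!
Induction on the length of the product. Let `k` be the smallest index occurring and split the
product at its unique factor with index `k` as `a * y * b`. Every index occurring in `a` or `b`
exceeds `k`, so by induction `a, b ∈ U k`; also `y ∈ U k`, hence
`a * y * b ∈ U k * U k * U k ⊆ U (k - 1)`. As `1 ∈ U (j + 1)`, the cube condition also makes
`U` antitone, so the same bound holds for any `m < k` in place of `k - 1`.
-/

open Pointwise

namespace CubeChain

variable {G : Type*} [Group G] {U : ℕ → Set G}
  (hcube : ∀ j, U (j + 1) * U (j + 1) * U (j + 1) ⊆ U j)
include hcube

theorem mul_mul_mem {k : ℕ} {a b c : G} (ha : a ∈ U (k + 1)) (hb : b ∈ U (k + 1))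
    (hc : c ∈ U (k + 1)) : a * b * c ∈ U k :=
  hcube k (Set.mul_mem_mul (Set.mul_mem_mul ha hb) hc)

variable (hone : ∀ j, (1 : G) ∈ U (j + 1))
include hone

theorem one_mem (j : ℕ) : (1 : G) ∈ U j := by
  cases j with
  | zero => simpa using mul_mul_mem hcube (hone 0) (hone 0) (hone 0)
  | succ j => exact hone j

theorem antitone : Antitone U :=
  antitone_nat_of_succ_le fun j a ha => by
    simpa using mul_mul_mem hcube (hone j) (hone j) ha

theorem prod_map_mem_of_lt {ι : Type*} (φ : ι → ℕ) (x : ι → G) (m : ℕ) (l : List ι)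
    (hnd : (l.map φ).Nodup) (hx : ∀ i ∈ l, x i ∈ U (φ i)) (hm : ∀ i ∈ l, m < φ i) :
    (l.map x).prod ∈ U m := by
  classical
  rcases eq_or_ne l [] with rfl | hne
  · simpa using one_mem hcube hone m
  obtain ⟨i, hi, hmin⟩ := l.toFinset.exists_min_image φ (by simpa using hne)
  obtain ⟨d, hd⟩ := Nat.exists_eq_add_of_lt (hm i (by simpa using hi))
  obtain ⟨l₁, l₂, rfl⟩ := List.append_of_mem (List.mem_toFinset.1 hi)
  simp only [List.map_append, List.map_cons, List.nodup_append, List.nodup_cons,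
    List.mem_map, List.mem_cons] at hnd
  obtain ⟨hnd₁, ⟨hi₂, hnd₂⟩, hdisj⟩ := hnd
  simp only [List.mem_toFinset, List.mem_append, List.mem_cons] at hmin
  have h₁ : (l₁.map x).prod ∈ U (φ i) := by
    refine prod_map_mem_of_lt φ x (φ i) l₁ hnd₁ (fun j hj => hx j (by simp [hj]))
      fun j hj => ?_
    exact (hmin j (Or.inl hj)).lt_of_ne (hdisj _ ⟨j, hj, rfl⟩ _ (Or.inl rfl)).symm
  have h₂ : (l₂.map x).prod ∈ U (φ i) := by
    refine prod_map_mem_of_lt φ x (φ i) l₂ hnd₂ (fun j hj => hx j (by simp [hj]))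
      fun j hj => ?_
    exact (hmin j (Or.inr (Or.inr hj))).lt_of_ne fun h => hi₂ ⟨j, hj, h.symm⟩
  have hxi : x i ∈ U (φ i) := hx i (by simp)
  rw [hd] at h₁ h₂ hxi
  simpa [List.prod_append, mul_assoc] using
    antitone hcube hone le_self_add (mul_mul_mem hcube h₁ hxi h₂)
termination_by l.length

end CubeChain

/-- If `1 ∈ U (j+1)` and `U (j+1) * U (j+1) * U (j+1) ⊆ U j` for all `j`, and
`φ : Fin (n+1) → ℕ \ {0}` is injective, then any ordered product of elements
`x j ∈ U (φ j)` lies in `U (k - 1)`, where `k = min φ`. -/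
theorem stmt_7 {G : Type*} [Group G] (U : ℕ → Set G)
    (hone : ∀ j : ℕ, (1 : G) ∈ U (j + 1))
    (hcube : ∀ j : ℕ, U (j + 1) * U (j + 1) * U (j + 1) ⊆ U j)
    (n : ℕ) (φ : Fin (n + 1) → ℕ) (hφ : Function.Injective φ) (h0 : ∀ j, φ j ≠ 0)
    (x : Fin (n + 1) → G) (hx : ∀ j, x j ∈ U (φ j)) :
    (List.ofFn x).prod ∈ U (Finset.univ.inf' Finset.univ_nonempty φ - 1) := by
  rw [List.ofFn_eq_map]
  refine CubeChain.prod_map_mem_of_lt hcube hone φ x _ _ ((List.nodup_finRange _).map hφ)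
    (fun j _ => hx j) fun j _ => ?_
  have hmin := Finset.inf'_le φ (Finset.mem_univ j)
  have hpos := h0 j
  omega
end

section
/- Let G be a metric topological group with a base {U_n : n ∈ ℕ} of symmetric open neighborhoods of the identity satisfying U_{n+1}·U_{n+1}·U_{n+1} ⊆ U_n for all n, let f : ℕ → ℕ∖{0}, and let {a_n} be a faithfully indexed sequence with {a_n^z : z ∈ ℤ, |z| ≤ f(n)} ⊆ U_n for every n. Then for every bijection φ : ℕ → ℕ and every z : ℕ → ℤ with |z(n)| ≤ f(φ(n)) for all n, the sequence {a_{φ(n)}^{z(n)}} is Cauchy productive. -/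
open Filter Topology Pointwise

/-!
Since `U (n+1)³ ⊆ U n`, a product of elements `c i ∈ U (ι i)` whose levels `ι i` are pairwise
distinct and all larger than `m` lies in `U m`: split the product at the factor of least level
`ℓ`; the two remaining pieces have levels `> ℓ`, so by induction they lie in `U ℓ`, and the
whole product lies in `U (ℓ - 1) ⊆ U m`. A block of consecutive factors
`a (φ i) ^ z i`, `k < i ≤ l`, is such a product with levels `φ i`, and these all exceed `m` once
`k` is large because `φ` is injective.
-/

section CubeSubset

variable {G : Type*} [Group G] {U : ℕ → Set G}

lemma antitone_of_cube_subset (hone : ∀ n, (1 : G) ∈ U n)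
    (hcube : ∀ n, U (n + 1) * U (n + 1) * U (n + 1) ⊆ U n) : Antitone U :=
  antitone_nat_of_succ_le fun n x hx => by
    simpa using hcube n (Set.mul_mem_mul (Set.mul_mem_mul (hone _) (hone _)) hx)

lemma List.prod_map_mem_of_cube_subset (hone : ∀ n, (1 : G) ∈ U n)
    (hcube : ∀ n, U (n + 1) * U (n + 1) * U (n + 1) ⊆ U n)
    {α : Type*} (ι : α → ℕ) (c : α → G) (m : ℕ) (l : List α) (hnodup : (l.map ι).Nodup)
    (hlevel : ∀ x ∈ l, m < ι x) (hc : ∀ x ∈ l, c x ∈ U (ι x)) :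
    (l.map c).prod ∈ U m := by
  classical
  induction hlen : l.length using Nat.strong_induction_on generalizing m l with
  | _ s ih =>
  subst hlen
  by_cases hne : l = []
  · simpa [hne] using hone m
  obtain ⟨x, hx, hmin⟩ := l.toFinset.exists_min_image ι (by simpa using hne)
  rw [List.mem_toFinset] at hx
  obtain ⟨s₁, s₂, rfl⟩ := List.append_of_mem hx
  obtain ⟨j, hj⟩ := Nat.exists_eq_add_of_lt (hlevel x hx)
  simp only [List.map_append, List.map_cons, List.nodup_append, List.nodup_cons,
    List.mem_map] at hnodup
  obtain ⟨hnodup₁, ⟨hx₂, hnodup₂⟩, hdisj⟩ := hnodup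
  have hpiece : ∀ s ⊆ s₁ ++ x :: s₂, (s.map ι).Nodup → (∀ y ∈ s, ι y ≠ ι x) →
      s.length < (s₁ ++ x :: s₂).length → (s.map c).prod ∈ U (m + j + 1) := by
    intro s hs hnodup hdistinct hlt
    refine ih _ hlt (m + j + 1) s hnodup (fun y hy => ?_) (fun y hy => hc y (hs hy)) rfl
    have := hmin y (List.mem_toFinset.mpr (hs hy))
    have := hdistinct y hy
    omega
  have h₁ := hpiece s₁ (by simp) hnodup₁
    (fun y hy => hdisj (ι y) ⟨y, hy, rfl⟩ (ι x) (by simp)) (by simp)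
  have h₂ := hpiece s₂ (fun y hy => by simp [hy]) hnodup₂
    (fun y hy h => hx₂ ⟨y, hy, h⟩) (by simp only [List.length_append, List.length_cons]; omega)
  have hx' : c x ∈ U (m + j + 1) := hj ▸ hc x hx
  rw [List.map_append, List.map_cons, List.prod_append, List.prod_cons, ← mul_assoc]
  exact antitone_of_cube_subset hone hcube (m.le_add_right j)
    (hcube (m + j) (Set.mul_mem_mul (Set.mul_mem_mul h₁ hx') h₂))

end CubeSubset

lemma partProd_add {G : Type*} [Monoid G] (b : ℕ → G) (k d : ℕ) :
    partProd b (k + d) = partProd b k * ((List.range' k d).map b).prod := by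
  simp only [partProd, List.range_eq_range', ← List.range'_append, List.map_append,
    List.prod_append, zero_add, one_mul]

lemma inv_partProd_mul_partProd {G : Type*} [Group G] (b : ℕ → G) {k l : ℕ} (h : k ≤ l) :
    (partProd b k)⁻¹ * partProd b l = ((List.range' k (l - k)).map b).prod := by
  rw [← Nat.add_sub_cancel' h, partProd_add, inv_mul_cancel_left, Nat.add_sub_cancel_left]

lemma leftCauchy_of_symmetric_basis {G : Type*} [Group G] [TopologicalSpace G] (U : ℕ → Set G)
    (hsymm : ∀ n, (U n)⁻¹ = U n) (hbase : ∀ V ∈ 𝓝 (1 : G), ∃ n, U n ⊆ V) {s : ℕ → G}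
    (h : ∀ m, ∃ N, ∀ k ≥ N, ∀ l ≥ k, (s k)⁻¹ * s l ∈ U m) : LeftCauchy s := by
  intro V hV
  obtain ⟨m, hm⟩ := hbase V hV
  obtain ⟨N, hN⟩ := h m
  refine ⟨N, fun k hk l hl => hm ?_⟩
  rcases le_total k l with hkl | hlk
  · exact hN k hk l hkl
  · rw [← hsymm, ← inv_inv ((s k)⁻¹ * s l), Set.inv_mem_inv, mul_inv_rev, inv_inv]
    exact hN l hl k hlk

theorem stmt_8_general {G : Type*} [Group G] [TopologicalSpace G]
    (U : ℕ → Set G)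
    (hnhds : ∀ n, U n ∈ 𝓝 (1 : G))
    (hsymm : ∀ n, (U n)⁻¹ = U n)
    (hbase : ∀ V ∈ 𝓝 (1 : G), ∃ n, U n ⊆ V)
    (hcube : ∀ n, U (n + 1) * U (n + 1) * U (n + 1) ⊆ U n)
    (f : ℕ → ℕ)
    (a : ℕ → G)
    (hin : ∀ n, ∀ z : ℤ, z.natAbs ≤ f n → a n ^ z ∈ U n)
    (φ : ℕ → ℕ) (hφ : Function.Bijective φ)
    (z : ℕ → ℤ) (hz : ∀ n, (z n).natAbs ≤ f (φ n)) :
    CauchyProductive (fun n => a (φ n) ^ z n) := by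
  have hone : ∀ n, (1 : G) ∈ U n := fun n => mem_of_mem_nhds (hnhds n)
  refine leftCauchy_of_symmetric_basis U hsymm hbase fun m => ?_
  obtain ⟨N, hN⟩ := eventually_atTop.mp (hφ.1.nat_tendsto_atTop.eventually_gt_atTop m)
  refine ⟨N, fun k hk l hkl => ?_⟩
  rw [inv_partProd_mul_partProd _ (Nat.succ_le_succ hkl)]
  refine List.prod_map_mem_of_cube_subset hone hcube φ _ m _
    ((List.nodup_range' 1).map hφ.1) (fun i hi => hN i ?_) (fun i _ => hin _ _ (hz i))
  rw [List.mem_range'_1] at hi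
  omega

/-- Building `f`-Cauchy productive sets in a metric group: given a base `{U n}` of symmetric
open neighborhoods of the identity with `U (n+1)³ ⊆ U n` and a faithfully indexed sequence
`a` with `{a n ^ z : |z| ≤ f n} ⊆ U n`, for every bijection `φ` of `ℕ` and every `z : ℕ → ℤ`
with `|z n| ≤ f (φ n)` the sequence `fun n => a (φ n) ^ z n` is Cauchy productive. -/
theorem stmt_8 {G : Type*} [Group G] [TopologicalSpace G] [IsTopologicalGroup G]
    [TopologicalSpace.MetrizableSpace G]
    (U : ℕ → Set G)
    (hnhds : ∀ n, U n ∈ 𝓝 (1 : G)) (hopen : ∀ n, IsOpen (U n))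
    (hsymm : ∀ n, (U n)⁻¹ = U n)
    (hbase : ∀ V ∈ 𝓝 (1 : G), ∃ n, U n ⊆ V)
    (hcube : ∀ n, U (n + 1) * U (n + 1) * U (n + 1) ⊆ U n)
    (f : ℕ → ℕ) (hf : ∀ n, 0 < f n)
    (a : ℕ → G) (hinj : Function.Injective a)
    (hin : ∀ n, ∀ z : ℤ, z.natAbs ≤ f n → a n ^ z ∈ U n)
    (φ : ℕ → ℕ) (hφ : Function.Bijective φ)
    (z : ℕ → ℤ) (hz : ∀ n, (z n).natAbs ≤ f (φ n)) :
    CauchyProductive (fun n => a (φ n) ^ z n) :=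
  stmt_8_general U hnhds hsymm hbase hcube f a hin φ hφ z hz
end

section
/- Let p be a prime and H a subgroup of the group ℤ_p of p-adic integers. If H contains an f_ω-summable set (i.e., H is not TAP) and H is infinite, then H = p^n·ℤ_p for some n ∈ ℕ; in particular H is open in ℤ_p. -/
open Filter Topology

def SumConverges {G : Type*} [AddCommMonoid G] [TopologicalSpace G] (c : ℕ → G) : Prop :=
  ∃ s : G, Tendsto (fun n => partSum c n) atTop (𝓝 s)

/-- A faithfully indexed set `{a n}` in an abelian topological group is `f_ω`-summable if
for every bijection `φ` of `ℕ` and every `z : ℕ → ℤ` the partial sums of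
`fun n => z n • a (φ n)` converge. -/
def FOmegaSummableSet {G : Type*} [AddCommGroup G] [TopologicalSpace G] (a : ℕ → G) : Prop :=
  Function.Injective a ∧
    ∀ φ : ℕ → ℕ, Function.Bijective φ → ∀ z : ℕ → ℤ,
      SumConverges (fun n => z n • a (φ n))

/-!
With `φ = id`, every series `∑ z i • a i` converges, and its limit lies in `H`. After dropping the
(at most one) zero term, every `t` with `‖t‖ ≤ ‖a k‖` is such a limit: choose the integer
coefficients greedily, which is possible because `‖y‖ ≤ ‖x‖` forces `x ∣ y` and `ℤ` is dense in
`ℤ_p`. So `H` contains a ball and is open, hence closed, hence stable under multiplication by the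
closure `ℤ_p` of `ℤ`: it is a nonzero ideal of the discrete valuation ring `ℤ_p`, i.e. `p^n ℤ_p`.
-/

theorem Function.Injective.exists_forall_add_ne {α : Type*} {f : ℕ → α}
    (hf : Function.Injective f) (x : α) : ∃ k, ∀ n, f (n + k) ≠ x := by
  have h := hf.tendsto_cofinite.eventually (eventually_cofinite_ne x)
  rw [Nat.cofinite_eq_atTop] at h
  obtain ⟨k, hk⟩ := eventually_atTop.mp h
  exact ⟨k, fun n => hk (n + k) (Nat.le_add_left k n)⟩

theorem partSum_eq_sub_of_forall_succ {G : Type*} [AddCommGroup G] {c r : ℕ → G}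
    (hr : ∀ n, r (n + 1) = r n - c n) (n : ℕ) : partSum c n = r 0 - r (n + 1) := by
  induction n with
  | zero => simp [partSum, hr]
  | succ n ih =>
    rw [partSum, Finset.sum_range_succ, ← partSum, ih, hr (n + 1)]
    abel

theorem tendsto_partSum_of_forall_succ {G : Type*} [AddCommGroup G] [TopologicalSpace G]
    [IsTopologicalAddGroup G] {c r : ℕ → G} (hr : ∀ n, r (n + 1) = r n - c n)
    (hlim : Tendsto r atTop (𝓝 0)) : Tendsto (partSum c) atTop (𝓝 (r 0)) := by
  have := tendsto_const_nhds (x := r 0) |>.sub (hlim.comp (tendsto_add_atTop_nat 1))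
  rw [sub_zero] at this
  exact this.congr fun n => (partSum_eq_sub_of_forall_succ hr n).symm

theorem FOmegaSummableSet.sumConverges_shift {G : Type*} [AddCommGroup G] [TopologicalSpace G]
    {a : ℕ → G} (ha : FOmegaSummableSet a) (k : ℕ) (z : ℕ → ℤ) :
    SumConverges fun i => z i • a (i + k) := by
  obtain ⟨s, hs⟩ := ha.2 id Function.bijective_id fun i => if k ≤ i then z (i - k) else 0
  refine ⟨s, (hs.comp (tendsto_add_atTop_nat k)).congr fun n => ?_⟩
  simp only [Function.comp, partSum, id]
  rw [show n + k + 1 = k + (n + 1) by omega, Finset.sum_range_add,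
    Finset.sum_eq_zero fun i hi => by simp [(Finset.mem_range.mp hi).not_ge], zero_add]
  simp [add_comm]

namespace PadicInt

variable {p : ℕ} [Fact p.Prime]

theorem dvd_of_norm_le {x y : ℤ_[p]} (hx : x ≠ 0) (h : ‖y‖ ≤ ‖x‖) : x ∣ y := by
  have hx' : (x : ℚ_[p]) ≠ 0 := fun h0 => hx (Subtype.ext h0)
  refine ⟨⟨(y : ℚ_[p]) / x, ?_⟩, ?_⟩
  · rw [norm_div, div_le_one (norm_pos_iff.mpr hx')]
    exact h
  · exact Subtype.ext (mul_div_cancel₀ _ hx').symm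

theorem exists_norm_sub_zsmul_lt {x y : ℤ_[p]} (hx : x ≠ 0) (h : ‖y‖ ≤ ‖x‖) {ε : ℝ}
    (hε : 0 < ε) : ∃ z : ℤ, ‖y - z • x‖ < ε := by
  obtain ⟨c, rfl⟩ := dvd_of_norm_le hx h
  obtain ⟨z, hz⟩ := Metric.denseRange_iff.mp denseRange_intCast c ε hε
  refine ⟨z, ?_⟩
  calc ‖x * c - z • x‖ = ‖x‖ * ‖c - z‖ := by rw [zsmul_eq_mul, ← norm_mul]; ring_nf
    _ ≤ ‖c - z‖ := mul_le_of_le_one_left (norm_nonneg _) (norm_le_one x)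
    _ < ε := by rwa [← dist_eq_norm]

/-- Greedy expansion, with invariant `‖r n‖ ≤ ‖b n‖` on the remainders: the coefficient of `b n`
pushes the next remainder below both `1 / (n + 1)` and `‖b (n + 1)‖`. -/
theorem exists_tendsto_partSum_zsmul {b : ℕ → ℤ_[p]} (hb : ∀ n, b n ≠ 0) {t : ℤ_[p]}
    (ht : ‖t‖ ≤ ‖b 0‖) : ∃ z : ℕ → ℤ, Tendsto (partSum fun i => z i • b i) atTop (𝓝 t) := by
  have step (n : ℕ) (r : ℤ_[p]) : ∃ z : ℤ, ‖r‖ ≤ ‖b n‖ →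
      ‖r - z • b n‖ < min (1 / ((n : ℝ) + 1)) ‖b (n + 1)‖ := by
    by_cases hr : ‖r‖ ≤ ‖b n‖
    · have hε : 0 < min (1 / ((n : ℝ) + 1)) ‖b (n + 1)‖ :=
        lt_min (by positivity) (norm_pos_iff.mpr (hb (n + 1)))
      obtain ⟨z, hz⟩ := exists_norm_sub_zsmul_lt (hb n) hr hε
      exact ⟨z, fun _ => hz⟩
    · exact ⟨0, fun h => absurd h hr⟩
  choose z hz using step
  let r : ℕ → ℤ_[p] := fun n => Nat.rec t (fun n r => r - z n r • b n) n
  have hr_succ (n : ℕ) : r (n + 1) = r n - z n (r n) • b n := rfl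
  have hr_le (n : ℕ) : ‖r n‖ ≤ ‖b n‖ := by
    induction n with
    | zero => exact ht
    | succ n ih => exact (hz n _ ih).le.trans (min_le_right _ _)
  have hr_lim : Tendsto r atTop (𝓝 0) := by
    refine (tendsto_add_atTop_iff_nat 1).mp (squeeze_zero_norm (fun n => ?_)
      tendsto_one_div_add_atTop_nhds_zero_nat)
    rw [hr_succ]
    exact (hz n _ (hr_le n)).le.trans (min_le_left _ _)
  exact ⟨fun n => z n (r n), tendsto_partSum_of_forall_succ hr_succ hr_lim⟩

theorem closedBall_subset_of_forall_tendsto_partSum {S : Set ℤ_[p]} {b : ℕ → ℤ_[p]}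
    (hb : ∀ n, b n ≠ 0)
    (hS : ∀ z : ℕ → ℤ, ∃ s ∈ S, Tendsto (partSum fun i => z i • b i) atTop (𝓝 s)) :
    Metric.closedBall 0 ‖b 0‖ ⊆ S := by
  intro t ht
  rw [mem_closedBall_zero_iff] at ht
  obtain ⟨z, hz⟩ := exists_tendsto_partSum_zsmul hb ht
  obtain ⟨s, hsS, hs⟩ := hS z
  rwa [tendsto_nhds_unique hz hs]

theorem mul_mem_of_isOpen {H : AddSubgroup ℤ_[p]} (hH : IsOpen (H : Set ℤ_[p]))
    (c : ℤ_[p]) {x : ℤ_[p]} (hx : x ∈ H) : c * x ∈ H :=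
  denseRange_intCast.induction_on (p := fun c => c * x ∈ H) c
    ((H.isClosed_of_isOpen hH).preimage (continuous_mul_const x))
    fun z => by simpa [← zsmul_eq_mul] using H.zsmul_mem hx z

def idealOfIsOpen (H : AddSubgroup ℤ_[p]) (hH : IsOpen (H : Set ℤ_[p])) : Ideal ℤ_[p] :=
  { H.toAddSubmonoid with smul_mem' := fun c _ hx => mul_mem_of_isOpen hH c hx }

theorem exists_eq_pow_mul_of_isOpen {H : AddSubgroup ℤ_[p]} (hH : IsOpen (H : Set ℤ_[p])) :
    ∃ n : ℕ, (H : Set ℤ_[p]) = {x : ℤ_[p] | ∃ y : ℤ_[p], x = (p : ℤ_[p]) ^ n * y} := by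
  have hne : idealOfIsOpen H hH ≠ ⊥ := by
    intro hbot
    have hpow : ∀ᶠ n in atTop, (p : ℤ_[p]) ^ n ∈ H :=
      tendsto_pow_atTop_nhds_zero_of_norm_lt_one (by simp [norm_p, inv_lt_one_of_one_lt₀,
        (Fact.out : p.Prime).one_lt]) (hH.mem_nhds H.zero_mem)
    obtain ⟨n, hn⟩ := hpow.exists
    have : (p : ℤ_[p]) ^ n ∈ idealOfIsOpen H hH := hn
    rw [hbot, Ideal.mem_bot] at this
    exact pow_ne_zero n (Nat.cast_ne_zero.mpr (Fact.out : p.Prime).ne_zero) this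
  obtain ⟨n, hn⟩ := ideal_eq_span_pow_p hne
  exact ⟨n, Set.ext fun x => (SetLike.ext_iff.mp hn x).trans Ideal.mem_span_singleton⟩

end PadicInt

open PadicInt in
theorem stmt_18_general (p : ℕ) [Fact p.Prime] (H : AddSubgroup ℤ_[p])
    (hnotTAP : ∃ a : ℕ → H, FOmegaSummableSet a) :
    ∃ n : ℕ, (H : Set ℤ_[p]) = {x : ℤ_[p] | ∃ y : ℤ_[p], x = (p : ℤ_[p]) ^ n * y} := by
  obtain ⟨a, ha⟩ := hnotTAP
  obtain ⟨k, hk⟩ := ha.1.exists_forall_add_ne 0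
  set b : ℕ → ℤ_[p] := fun n => a (n + k)
  have hb (n : ℕ) : b n ≠ 0 := by simpa [b] using hk n
  have hsum (z : ℕ → ℤ) : ∃ s ∈ (H : Set ℤ_[p]),
      Tendsto (partSum fun i => z i • b i) atTop (𝓝 s) := by
    obtain ⟨s, hs⟩ := ha.sumConverges_shift k z
    refine ⟨s, s.2, ((continuous_subtype_val.tendsto s).comp hs).congr fun n => ?_⟩
    simp [partSum, b]
  have hball := closedBall_subset_of_forall_tendsto_partSum hb hsum
  have hopen : IsOpen (H : Set ℤ_[p]) := H.isOpen_of_mem_nhds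
    (mem_of_superset (Metric.closedBall_mem_nhds 0 (norm_pos_iff.mpr (hb 0))) hball)
  exact exists_eq_pow_mul_of_isOpen hopen

/-- If an infinite subgroup `H` of the `p`-adic integers `ℤ_p` contains an `f_ω`-summable
set (i.e. `H` is not TAP), then `H = p^n • ℤ_p` for some `n : ℕ`; in particular `H` is
open in `ℤ_p`. -/
theorem stmt_18 (p : ℕ) [Fact p.Prime] (H : AddSubgroup ℤ_[p])
    (hinf : (H : Set ℤ_[p]).Infinite)
    (hnotTAP : ∃ a : ℕ → H, FOmegaSummableSet a) :
    ∃ n : ℕ, (H : Set ℤ_[p]) = {x : ℤ_[p] | ∃ y : ℤ_[p], x = (p : ℤ_[p]) ^ n * y} :=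
  stmt_18_general p H hnotTAP
end
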